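/- For a point x on the boundary sphere of the closed unit 3-ball with x₃ > 0 (strictly in the open upper hemisphere), the points x and f_z(g_{p,q}(x)) are distinct, so the equivalence class of x under the lens space identification contains exactly 2 points. -/

import Mathlib

open Real

/-- The rotation matrix of angle `2πq/p` about the `z`-axis. -/
noncomputable def rotM (p q : ℤ) : Matrix (Fin 3) (Fin 3) ℝ :=
  !![Real.cos (2 * Real.pi * q / p), -Real.sin (2 * Real.pi * q / p), 0;
     Real.sin (2 * Real.pi * q / p),  Real.cos (2 * Real.pi * q / p), 0;
     0, 0, 1]

/-- The reflection `f_z(x,y,z) = (x,y,-z)` on `ℝ³`. -/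
def fz (x : EuclideanSpace ℝ (Fin 3)) : EuclideanSpace ℝ (Fin 3) :=
  WithLp.toLp 2 ![x 0, x 1, -(x 2)]

/-- The identification map `h = f_z ∘ g_{p,q}` on `ℝ³`. -/
noncomputable def hMap (p q : ℤ) (x : EuclideanSpace ℝ (Fin 3)) :
    EuclideanSpace ℝ (Fin 3) :=
  fz (WithLp.toLp 2 ((rotM p q).mulVec x))

/-- The generating relation of the lens space identification: each point `x` of the
closed upper hemisphere of the boundary sphere is identified with `f_z(g_{p,q}(x))`. -/
noncomputable def lensRel (p q : ℤ)
    (x y : EuclideanSpace ℝ (Fin 3)) : Prop :=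
  ‖x‖ = 1 ∧ 0 ≤ x 2 ∧ y = hMap p q x

lemma hMap_two (p q : ℤ) (x : EuclideanSpace ℝ (Fin 3)) : hMap p q x 2 = -(x 2) := by
  simp [hMap, fz, rotM, Matrix.mulVec, dotProduct, Fin.sum_univ_three]

lemma hMap_inj (p q : ℤ) : Function.Injective (hMap p q) := by
  intro a b h
  have h0 := congrArg (fun v : EuclideanSpace ℝ (Fin 3) => v 0) h
  have h1 := congrArg (fun v : EuclideanSpace ℝ (Fin 3) => v 1) h
  have h2 := congrArg (fun v : EuclideanSpace ℝ (Fin 3) => v 2) h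
  simp [hMap, fz, rotM, Matrix.mulVec, dotProduct, Fin.sum_univ_three] at h0 h1 h2
  have hcs := Real.sin_sq_add_cos_sq (2 * Real.pi * q / p)
  ext i
  fin_cases i
  · show a 0 = b 0
    linear_combination Real.cos (2 * Real.pi * q / p) * h0 + Real.sin (2 * Real.pi * q / p) * h1 + (b 0 - a 0) * hcs
  · show a 1 = b 1
    linear_combination (- Real.sin (2 * Real.pi * q / p)) * h0 + Real.cos (2 * Real.pi * q / p) * h1 + (b 1 - a 1) * hcs
  · show a 2 = b 2
    exact h2

theorem stmt_6 (p q : ℤ) (hp : 1 ≤ p) (hq0 : 0 ≤ q) (hqp : q < p)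
    (hpq : Int.gcd p q = 1)
    (x : EuclideanSpace ℝ (Fin 3)) (hx : ‖x‖ = 1) (hx2 : 0 < x 2) :
    hMap p q x ≠ x ∧
      Set.ncard {y : EuclideanSpace ℝ (Fin 3) |
        Relation.EqvGen (lensRel p q) x y} = 2 := by
  have hne : hMap p q x ≠ x := by
    intro h
    have := congrArg (fun v : EuclideanSpace ℝ (Fin 3) => v 2) h
    rw [hMap_two] at this
    linarith
  refine ⟨hne, ?_⟩
  set S : Set (EuclideanSpace ℝ (Fin 3)) := {x, hMap p q x} with hS
  have hxS : x ∈ S := Or.inl rfl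
  have step : ∀ a b, lensRel p q a b → (a ∈ S ↔ b ∈ S) := by
    rintro a b ⟨hna, ha2, rfl⟩
    constructor
    · rintro (rfl | rfl)
      · exact Or.inr rfl
      · exfalso; rw [hMap_two] at ha2; linarith
    · rintro (hb | hb)
      · exfalso
        have := congrArg (fun v : EuclideanSpace ℝ (Fin 3) => v 2) hb
        simp only [hMap_two] at this
        linarith [ha2, this ▸ hx2]
      · exact Or.inl (hMap_inj p q hb)
  have inv : ∀ a b, Relation.EqvGen (lensRel p q) a b → (a ∈ S ↔ b ∈ S) := by
    intro a b h
    induction h with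
    | rel a b hab => exact step a b hab
    | refl a => exact Iff.rfl
    | symm a b _ ih => exact ih.symm
    | trans a b c _ _ ih1 ih2 => exact ih1.trans ih2
  have hset : {y : EuclideanSpace ℝ (Fin 3) | Relation.EqvGen (lensRel p q) x y} = S := by
    ext y
    constructor
    · intro h
      exact (inv x y h).mp hxS
    · rintro (rfl | rfl)
      · exact Relation.EqvGen.refl y
      · exact Relation.EqvGen.rel _ _ ⟨hx, le_of_lt hx2, rfl⟩
  rw [hset, hS, Set.ncard_pair hne.symm]
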